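/- arXiv:2401.08843 — 4 statements merged into one kernel-verified Lean document; each statement's English description precedes it below -/
import Mathlib

section
/- Let K be an algebraically closed field of characteristic 3 and i ∈ K with i^2 = −1. Let G ≅ ℤ/4ℤ act on K[a,b] with generator sending (a,b) ↦ (ia, −ib). Then K[a,b]^G = K[a^4, ab, b^4], and the generators I_1 = a^4, I_2 = ab, I_3 = b^4 satisfy I_1 I_3 = I_2^4. -/
open MvPolynomial

/-- For `K` algebraically closed of characteristic 3 and `i² = -1`, the invariant ring
of the order-4 action `(a,b) ↦ (ia, -ib)` on `K[a,b]` is `K[a⁴, ab, b⁴]`, and the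
generators satisfy `a⁴ · b⁴ = (ab)⁴`. -/
theorem invariants_g3_rank2 (K : Type*) [Field K] [IsAlgClosed K] [CharP K 3]
    (i : K) (hi : i ^ 2 = -1) :
    (∀ f : MvPolynomial (Fin 2) K,
        MvPolynomial.aeval ![C i * X 0, C (-i) * X 1] f = f ↔
          f ∈ Algebra.adjoin K
            {(X 0 : MvPolynomial (Fin 2) K) ^ 4, X 0 * X 1, (X 1 : MvPolynomial (Fin 2) K) ^ 4}) ∧
    (X 0 : MvPolynomial (Fin 2) K) ^ 4 * X 1 ^ 4 = (X 0 * X 1) ^ 4 := by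
  have h4 : i ^ 4 = 1 := by
    have : i ^ 4 = (i ^ 2) ^ 2 := by ring
    rw [this, hi]; ring
  have hii : i * (-i) = 1 := by
    have : i * (-i) = -(i ^ 2) := by ring
    rw [this, hi]; ring
  have hne1 : (-1 : K) ≠ 1 := by
    intro h
    have : (2 : K) = 0 := by linear_combination -h
    have h3 := CharP.cast_eq_zero (K) 3
    push_cast at h3
    have : (1 : K) = 0 := by linear_combination h3 - this
    exact one_ne_zero this
  -- order of i is 4
  have hord : orderOf i = 4 := by
    have : Fact (Nat.Prime 2) := ⟨Nat.prime_two⟩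
    have := orderOf_eq_prime_pow (x := i) (p := 2) (n := 1)
      (by rw [pow_one, hi]; exact hne1) (by norm_num [h4])
    simpa using this
  refine ⟨fun f => ?_, by ring⟩
  set σ : MvPolynomial (Fin 2) K →ₐ[K] MvPolynomial (Fin 2) K :=
    aeval ![C i * X 0, C (-i) * X 1] with hσ
  have key : ∀ (d : Fin 2 →₀ ℕ) (c : K),
      σ (monomial d c) = monomial d ((i ^ d 0 * (-i) ^ d 1) * c) := by
    intro d c
    rw [hσ, aeval_monomial,
      Finsupp.prod_fintype _ _ (fun j => pow_zero _), Fin.prod_univ_two,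
      monomial_eq, Finsupp.prod_fintype _ _ (fun j => pow_zero _), Fin.prod_univ_two]
    simp only [Matrix.cons_val_zero, Matrix.cons_val_one, Matrix.head_cons,
      algebraMap_eq, mul_pow, ← C_pow, C_mul]
    ring
  have keyc : ∀ (f : MvPolynomial (Fin 2) K) (d : Fin 2 →₀ ℕ),
      coeff d (σ f) = (i ^ d 0 * (-i) ^ d 1) * coeff d f := by
    intro f
    induction f using MvPolynomial.induction_on' with
    | monomial e c =>
      intro d
      rw [key, coeff_monomial, coeff_monomial]
      split_ifs with h
      · subst h; rfl
      · rw [mul_zero]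
    | add p q hp hq =>
      intro d
      simp [map_add, hp, hq]; ring
  constructor
  · intro hf
    rw [f.as_sum]
    refine Subalgebra.sum_mem _ (fun d hd => ?_)
    have hc : coeff d f ≠ 0 := MvPolynomial.mem_support_iff.mp hd
    have hs : i ^ d 0 * (-i) ^ d 1 = 1 := by
      have h1 := keyc f d
      rw [hf] at h1
      have h2 : (i ^ d 0 * (-i) ^ d 1 - 1) * coeff d f = 0 := by linear_combination -h1
      rcases mul_eq_zero.mp h2 with h | h
      · exact sub_eq_zero.mp h
      · exact absurd h hc
    -- turn into divisibility
    have hni : -i = i ^ 3 := by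
      have : i ^ 3 = i ^ 2 * i := by ring
      rw [this, hi]; ring
    have hs' : i ^ (d 0 + 3 * d 1) = 1 := by
      rw [pow_add, pow_mul, ← hni]
      simpa using hs
    have hdvd : 4 ∣ d 0 + 3 * d 1 := by
      rw [← hord]; exact orderOf_dvd_of_pow_eq_one hs'
    have hmod : d 0 % 4 = d 1 % 4 := by omega
    -- show monomial d c in adjoin
    have hexp : monomial d (coeff d f)
        = C (coeff d f) * (X 0 ^ d 0 * X 1 ^ d 1) := by
      rw [monomial_eq, Finsupp.prod_fintype _ _ (fun j => pow_zero _), Fin.prod_univ_two]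
    rw [hexp]
    refine Subalgebra.mul_mem _ ?_ ?_
    · exact Subalgebra.algebraMap_mem _ _
    · set A := Algebra.adjoin K
        {(X 0 : MvPolynomial (Fin 2) K) ^ 4, X 0 * X 1, (X 1 : MvPolynomial (Fin 2) K) ^ 4}
      have g1 : (X 0 : MvPolynomial (Fin 2) K) ^ 4 ∈ A :=
        Algebra.subset_adjoin (by simp)
      have g2 : (X 0 : MvPolynomial (Fin 2) K) * X 1 ∈ A :=
        Algebra.subset_adjoin (by simp)
      have g3 : (X 1 : MvPolynomial (Fin 2) K) ^ 4 ∈ A :=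
        Algebra.subset_adjoin (by simp)
      rcases le_total (d 0) (d 1) with h | h
      · obtain ⟨k, hk⟩ : ∃ k, d 1 = d 0 + 4 * k := ⟨(d 1 - d 0) / 4, by omega⟩
        have : (X 0 : MvPolynomial (Fin 2) K) ^ d 0 * X 1 ^ d 1
            = (X 0 * X 1) ^ d 0 * (X 1 ^ 4) ^ k := by rw [hk]; ring
        rw [this]
        exact Subalgebra.mul_mem _ (Subalgebra.pow_mem _ g2 _) (Subalgebra.pow_mem _ g3 _)
      · obtain ⟨k, hk⟩ : ∃ k, d 0 = d 1 + 4 * k := ⟨(d 0 - d 1) / 4, by omega⟩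
        have : (X 0 : MvPolynomial (Fin 2) K) ^ d 0 * X 1 ^ d 1
            = (X 0 * X 1) ^ d 1 * (X 0 ^ 4) ^ k := by rw [hk]; ring
        rw [this]
        exact Subalgebra.mul_mem _ (Subalgebra.pow_mem _ g2 _) (Subalgebra.pow_mem _ g1 _)
  · intro hf
    show σ f = f
    refine Algebra.adjoin_induction ?_ ?_ ?_ ?_ hf
    · intro x hx
      simp only [Set.mem_insert_iff, Set.mem_singleton_iff] at hx
      rcases hx with rfl | rfl | rfl
      · simp [hσ, map_pow, mul_pow, ← C_pow, h4]
      · have : σ (X 0 * X 1) = C (i * -i) * (X 0 * X 1) := by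
          simp [hσ, C_mul]; ring
        rw [this, hii]; simp
      · have h4' : (-i) ^ 4 = 1 := by rw [show (-i) ^ 4 = i ^ 4 by ring, h4]
        have he : σ (X 1 ^ 4) = C ((-i) ^ 4) * X 1 ^ 4 := by
          rw [hσ, map_pow, aeval_X]
          simp only [Matrix.cons_val_one, Matrix.head_cons, Matrix.cons_val_zero]
          rw [mul_pow, C_pow]
        rw [he, h4', C_1, one_mul]
    · intro r; exact σ.commutes r
    · intro x y _ _ hx hy; rw [map_add, hx, hy]
    · intro x y _ _ hx hy; rw [map_mul, hx, hy]
end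

section
/- Let K be an algebraically closed field of characteristic 5. Every isomorphism of the form (x,y) ↦ ((αx+β)/(γx+δ), λy + h(x)) between two curves in standard form y^5 − y = x^3 + a x^2 and y^5 − y = x^3 + a' x^2 (fixing the pole at infinity, monic leading term, no linear or constant term) must have γ = 0, and with δ = 1 satisfies λ = α^3, α^{12} = 1, and β ∈ {0, −2a/3}. Consequently a' = α a for some α with α^{12} = 1. -/
theorem key_identity_aux (K : Type*) [Field K]
    (a a' α β γ δ lam : K) (p q : Polynomial K) (hq0 : q ≠ 0)
    (heq : RatFunc.C lam * ((RatFunc.X : RatFunc K) ^ 3 + RatFunc.C a' * RatFunc.X ^ 2)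
          + (algebraMap (Polynomial K) (RatFunc K) p / algebraMap (Polynomial K) (RatFunc K) q) ^ 5
          - (algebraMap (Polynomial K) (RatFunc K) p / algebraMap (Polynomial K) (RatFunc K) q)
        = ((RatFunc.C α * RatFunc.X + RatFunc.C β) /
            (RatFunc.C γ * RatFunc.X + RatFunc.C δ)) ^ 3
          + RatFunc.C a * ((RatFunc.C α * RatFunc.X + RatFunc.C β) /
            (RatFunc.C γ * RatFunc.X + RatFunc.C δ)) ^ 2)
    (hD : (Polynomial.C γ * Polynomial.X + Polynomial.C δ : Polynomial K) ≠ 0) :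
    (Polynomial.C lam * (Polynomial.X^3 + Polynomial.C a' * Polynomial.X^2)) * q^5
        * (Polynomial.C γ * Polynomial.X + Polynomial.C δ)^3
      + p^5 * (Polynomial.C γ * Polynomial.X + Polynomial.C δ)^3
      - p * q^4 * (Polynomial.C γ * Polynomial.X + Polynomial.C δ)^3
    = (Polynomial.C α * Polynomial.X + Polynomial.C β)^3 * q^5
      + Polynomial.C a * (Polynomial.C α * Polynomial.X + Polynomial.C β)^2
        * (Polynomial.C γ * Polynomial.X + Polynomial.C δ) * q^5 := by
  apply RatFunc.algebraMap_injective K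
  have hq : algebraMap (Polynomial K) (RatFunc K) q ≠ 0 := RatFunc.algebraMap_ne_zero hq0
  have hD' : (RatFunc.C γ * RatFunc.X + RatFunc.C δ : RatFunc K) ≠ 0 := by
    have := RatFunc.algebraMap_ne_zero (K := K) hD
    simpa only [map_add, map_mul, RatFunc.algebraMap_C, RatFunc.algebraMap_X] using this
  simp only [map_add, map_mul, map_sub, map_pow, RatFunc.algebraMap_C, RatFunc.algebraMap_X]
  field_simp at heq
  apply mul_right_cancel₀ (b := algebraMap (Polynomial K) (RatFunc K) q
      * (RatFunc.C γ * RatFunc.X + RatFunc.C δ) ^ 2)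
    (mul_ne_zero hq (pow_ne_zero 2 hD'))
  rw [eq_div_iff (pow_ne_zero 3 (by rwa [mul_comm RatFunc.X]))] at heq
  linear_combination (algebraMap (Polynomial K) (RatFunc K) q
      * (RatFunc.C γ * RatFunc.X + RatFunc.C δ) ^ 2) * heq

section Aux
open Polynomial

theorem gamma_ne_aux (K : Type*) [Field K]
    (a a' α β γ δ lam : K) (hM : α * δ - β * γ ≠ 0) (p q : Polynomial K)
    (hcop : IsCoprime p q) (hγ : γ ≠ 0)
    (key : (C lam * (X^3 + C a' * X^2)) * q^5 * (C γ * X + C δ)^3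
      + p^5 * (C γ * X + C δ)^3
      - p * q^4 * (C γ * X + C δ)^3
    = (C α * X + C β)^3 * q^5
      + C a * (C α * X + C β)^2 * (C γ * X + C δ) * q^5) : False := by
  set r : K := -δ/γ with hr
  have hDr : γ * r + δ = 0 := by rw [hr]; field_simp; ring
  have hNr : α * r + β ≠ 0 := by
    rw [hr]
    field_simp
    intro hc
    apply hM
    have hc' := (div_eq_zero_iff.mp hc).resolve_right hγ
    linear_combination -hc'
  have hDfac : (C γ * X + C δ : Polynomial K) = C γ * (X - C r) := by
    have : γ * r = -δ := by linear_combination hDr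
    rw [mul_sub, ← C_mul, this, C_neg]
    ring
  have e0 := congrArg (Polynomial.eval r) key
  simp only [eval_add, eval_sub, eval_mul, eval_pow, eval_C, eval_X] at e0
  rw [hDr] at e0
  simp only [ne_eq, OfNat.ofNat_ne_zero, not_false_eq_true, zero_pow, mul_zero, zero_mul,
    add_zero, sub_zero, zero_add] at e0
  have hqr : q.eval r = 0 := by
    by_contra hne
    exact (mul_ne_zero (pow_ne_zero 3 hNr) (pow_ne_zero 5 hne)) e0.symm
  have hπq : (X - C r : Polynomial K) ∣ q := dvd_iff_isRoot.mpr hqr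
  obtain ⟨t, ht⟩ := hπq
  rw [hDfac, ht] at key
  have hdvd : (X - C r : Polynomial K)^4 ∣ p^5 * (C γ)^3 * (X - C r)^3 := by
    refine ⟨(C α * X + C β)^3 * t^5 * (X - C r)
      + C a * (C α * X + C β)^2 * C γ * t^5 * (X - C r)^2
      + p * t^4 * (C γ)^3 * (X - C r)^3
      - (C lam * (X^3 + C a' * X^2)) * t^5 * (C γ)^3 * (X - C r)^4, ?_⟩
    linear_combination key
  have hπp : (X - C r : Polynomial K) ∣ p := by
    have h3 : ((X - C r : Polynomial K))^3 ≠ 0 := pow_ne_zero _ (X_sub_C_ne_zero r)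
    have : (X - C r : Polynomial K)^3 * (X - C r) ∣ (X - C r)^3 * (p^5 * (C γ)^3) := by
      obtain ⟨w, hw⟩ := hdvd
      exact ⟨w, by linear_combination hw⟩
    have hd : (X - C r : Polynomial K) ∣ p^5 * (C γ)^3 := (mul_dvd_mul_iff_left h3).mp this
    rcases (prime_X_sub_C r).dvd_or_dvd hd with h | h
    · exact (prime_X_sub_C r).dvd_of_dvd_pow h
    · exfalso
      have hu : IsUnit ((C γ : Polynomial K)^3) := (isUnit_C.mpr hγ.isUnit).pow 3
      exact (prime_X_sub_C r).not_unit (isUnit_of_dvd_unit h hu)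
  obtain ⟨u, v, huv⟩ := hcop
  have hev := congrArg (Polynomial.eval r) huv
  have hpr : p.eval r = 0 := by
    obtain ⟨s, hs⟩ := hπp
    rw [hs]
    simp
  simp [hpr, hqr] at hev

theorem gamma_zero_aux (K : Type*) [Field K] [CharP K 5]
    (a a' α β δ lam : K) (hM : α * δ - β * (0:K) ≠ 0) (hlam : lam ^ 4 = 1)
    (p q : Polynomial K) (hq0 : q ≠ 0) (hcop : IsCoprime p q) (hmon : q.Monic)
    (key : (C lam * (X^3 + C a' * X^2)) * q^5 * (C (0:K) * X + C δ)^3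
      + p^5 * (C (0:K) * X + C δ)^3
      - p * q^4 * (C (0:K) * X + C δ)^3
    = (C α * X + C β)^3 * q^5
      + C a * (C α * X + C β)^2 * (C (0:K) * X + C δ) * q^5) :
    (δ = 1 → lam = α ^ 3 ∧ α ^ 12 = 1 ∧ (β = 0 ∨ β = -(2 * a) / 3)) ∧
      ∃ μ : K, μ ^ 12 = 1 ∧ a' = μ * a := by
  have hαδ : α * δ ≠ 0 := by simpa using hM
  have hα : α ≠ 0 := fun hc => hαδ (by rw [hc]; ring)
  have hδ : δ ≠ 0 := fun hc => hαδ (by rw [hc]; ring)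
  have hlam0 : lam ≠ 0 := fun hc => by simp [hc] at hlam
  simp only [C_0, zero_mul, zero_add] at key
  have hqdvd : q ∣ p^5 * C (δ^3) := by
    refine ⟨(C α * X + C β)^3 * q^4 + C a * (C α * X + C β)^2 * C δ * q^4
      + p * q^3 * (C δ)^3 - (C lam * (X^3 + C a' * X^2)) * q^4 * (C δ)^3, ?_⟩
    rw [C_pow] at *
    linear_combination key
  have hq1 : q = 1 := by
    have : q ∣ C (δ^3) := (hcop.symm.pow_right (n := 5)).dvd_of_dvd_mul_left hqdvd
    exact hmon.eq_one_of_isUnit (isUnit_of_dvd_unit this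
      (isUnit_C.mpr (pow_ne_zero 3 hδ).isUnit))
  subst hq1
  simp only [one_pow, mul_one] at key
  have hpdeg : p.natDegree = 0 := by
    by_contra hd
    have hp0 : p ≠ 0 := fun hc => hd (by rw [hc]; simp)
    have h5d : (p^5 * C (δ^3)).natDegree = 5 * p.natDegree := by
      rw [natDegree_mul (pow_ne_zero _ hp0) (C_ne_zero.mpr (pow_ne_zero 3 hδ)),
        natDegree_pow, natDegree_C, add_zero]
    have hid : p^5 * C (δ^3) = (C α * X + C β)^3 + C a * (C α * X + C β)^2 * C δ
        + p * C (δ^3) - (C lam * (X^3 + C a' * X^2)) * C (δ^3) := by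
      rw [C_pow] at *
      linear_combination key
    have hb1 : ((C α * X + C β : Polynomial K)^3
        + C a * (C α * X + C β)^2 * C δ).natDegree ≤ 3 := by
      compute_degree
    have hb2 : ((C lam * (X^3 + C a' * X^2)) * C (δ^3) : Polynomial K).natDegree ≤ 3 := by
      compute_degree
    have hb3 : (p * C (δ^3)).natDegree ≤ p.natDegree := by
      apply le_trans (natDegree_mul_le)
      simp
    have hle : (p^5 * C (δ^3)).natDegree ≤ max (max 3 p.natDegree) 3 := by
      rw [hid]
      exact le_trans (natDegree_sub_le _ _)
        (max_le_max (le_trans (natDegree_add_le _ _) (max_le_max hb1 hb3)) hb2)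
    rw [h5d] at hle
    omega
  obtain ⟨c, rfl⟩ := natDegree_eq_zero.mp hpdeg
  have key2 : C (lam * δ^3) * X^3 + C (lam * a' * δ^3) * X^2 + C (c^5 * δ^3 - c * δ^3)
      = C (α^3) * X^3 + C (3*α^2*β + a*δ*α^2) * X^2 + C (3*α*β^2 + 2*a*δ*α*β) * X
        + C (β^3 + a*δ*β^2) := by
    simp only [C_mul, C_add, C_sub, C_pow, map_ofNat]
    linear_combination key
  have E3 : lam * δ^3 = α^3 := by
    have h := congrArg (fun f => Polynomial.coeff f 3) key2
    simp only [coeff_add, coeff_C_mul, coeff_X_pow, coeff_X, coeff_C] at h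
    norm_num at h
    exact h
  have E2 : lam * a' * δ^3 = 3*α^2*β + a*δ*α^2 := by
    have h := congrArg (fun f => Polynomial.coeff f 2) key2
    simp only [coeff_add, coeff_C_mul, coeff_X_pow, coeff_X, coeff_C] at h
    norm_num at h
    exact h
  have E1 : (0:K) = 3*α*β^2 + 2*a*δ*α*β := by
    have h := congrArg (fun f => Polynomial.coeff f 1) key2
    simp only [coeff_add, coeff_C_mul, coeff_X_pow, coeff_X, coeff_C] at h
    norm_num at h
    linear_combination h
  have h3ne : (3:K) ≠ 0 := by
    have h5 : ((3:ℕ):K) ≠ 0 := by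
      rw [Ne, CharP.cast_eq_zero_iff K 5 3]; omega
    simpa using h5
  have hβcases : β = 0 ∨ 3 * β = -(2 * a * δ) := by
    have hfac : α * β * (3*β + 2*a*δ) = 0 := by linear_combination E1.symm
    rcases mul_eq_zero.mp hfac with h | h
    · rcases mul_eq_zero.mp h with h | h
      · exact absurd h hα
      · exact Or.inl h
    · right; linear_combination h
  have h12 : α ^ 12 = δ ^ 12 := by
    calc α^12 = (α^3)^4 := by ring
    _ = (lam * δ^3)^4 := by rw [E3]
    _ = lam^4 * δ^12 := by ring
    _ = δ^12 := by rw [hlam]; ring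
  constructor
  · rintro rfl
    refine ⟨by linear_combination E3, by rw [h12]; norm_num, ?_⟩
    rcases hβcases with h | h
    · exact Or.inl h
    · right
      rw [eq_div_iff h3ne]
      linear_combination h
  · rcases hβcases with h | h
    · refine ⟨δ/α, ?_, ?_⟩
      · field_simp [h12]
        exact h12.symm
      · have hE2' : lam * a' * δ^3 = a * δ * α^2 := by rw [E2, h]; ring
        have hcancel : lam * δ^3 * (a' * α) = lam * δ^3 * (δ * a) := by
          linear_combination α * hE2' - (a * δ) * E3
        have hc2 := mul_left_cancel₀ (mul_ne_zero hlam0 (pow_ne_zero 3 hδ)) hcancel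
        field_simp
        linear_combination hc2
    · refine ⟨-(δ/α), ?_, ?_⟩
      · rw [show (-(δ/α))^12 = (δ/α)^12 by ring]
        field_simp [h12]
        exact h12.symm
      · have h2 : lam * a' * δ^3 = -(a * δ) * α^2 := by
          rw [E2]
          linear_combination α^2 * h
        have hcancel : lam * δ^3 * (a' * α) = lam * δ^3 * (-(δ) * a) := by
          linear_combination α * h2 + (a * δ) * E3
        have hc2 := mul_left_cancel₀ (mul_ne_zero hlam0 (pow_ne_zero 3 hδ)) hcancel
        field_simp
        linear_combination hc2

end Aux

open RatFunc

/-- Classification of isomorphisms `(x,y) ↦ ((αx+β)/(γx+δ), λy + h(x))` between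
standard forms `y⁵-y = x³+a'x²` and `y⁵-y = x³+ax²` in characteristic 5: necessarily
`γ = 0`; normalizing `δ = 1` one gets `λ = α³`, `α¹² = 1`, `β ∈ {0, -2a/3}`; and
consequently `a' = μa` for some `μ` with `μ¹² = 1`. -/
theorem isomorphisms_g4_rank0_p5 (K : Type*) [Field K] [IsAlgClosed K] [CharP K 5]
    (a a' α β γ δ lam : K) (hM : α * δ - β * γ ≠ 0) (hlam : lam ^ 4 = 1)
    (h : RatFunc K)
    (heq : RatFunc.C lam * ((RatFunc.X : RatFunc K) ^ 3 + RatFunc.C a' * RatFunc.X ^ 2)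
          + h ^ 5 - h
        = ((RatFunc.C α * RatFunc.X + RatFunc.C β) /
            (RatFunc.C γ * RatFunc.X + RatFunc.C δ)) ^ 3
          + RatFunc.C a * ((RatFunc.C α * RatFunc.X + RatFunc.C β) /
            (RatFunc.C γ * RatFunc.X + RatFunc.C δ)) ^ 2) :
    γ = 0 ∧
      (δ = 1 → lam = α ^ 3 ∧ α ^ 12 = 1 ∧ (β = 0 ∨ β = -(2 * a) / 3)) ∧
      ∃ μ : K, μ ^ 12 = 1 ∧ a' = μ * a := by
  rw [← RatFunc.num_div_denom h] at heq
  have hq0 : h.denom ≠ 0 := RatFunc.denom_ne_zero h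
  have hcop : IsCoprime h.num h.denom := RatFunc.isCoprime_num_denom h
  have hmon : h.denom.Monic := RatFunc.monic_denom h
  have hγ : γ = 0 := by
    by_contra hγ
    have hD : (Polynomial.C γ * Polynomial.X + Polynomial.C δ : Polynomial K) ≠ 0 := by
      intro hc
      apply hγ
      simpa using congrArg (fun f => Polynomial.coeff f 1) hc
    exact gamma_ne_aux K a a' α β γ δ lam hM h.num h.denom hcop hγ
      (key_identity_aux K a a' α β γ δ lam h.num h.denom hq0 heq hD)
  subst hγ
  have hδ : δ ≠ 0 := by
    intro hc
    apply hM
    rw [hc]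
    ring
  have hD : (Polynomial.C (0:K) * Polynomial.X + Polynomial.C δ : Polynomial K) ≠ 0 := by
    simp [hδ]
  refine ⟨rfl, ?_⟩
  exact gamma_zero_aux K a a' α β δ lam hM hlam h.num h.denom hq0 hcop hmon
    (key_identity_aux K a a' α β 0 δ lam h.num h.denom hq0 heq hD)
end

section
/- Let K be an algebraically closed field of characteristic 5 and a ∈ K^×. For λ ∈ 𝔽_5^× and γ = λ/a, the substitution x ↦ 1/(γx) transforms f(x) = x + a/x into (a γ x)/λ + 1/(λγx) = x·(aγ/λ) + (a/λ^2)/x; hence with monic normalization the curve y^5 − y = x + a/x is isomorphic to y^5 − y = x + (a/λ^2)/x. Consequently, two curves y^5 − y = x + a/x and y^5 − y = x + a'/x with a, a' ∈ K^× are isomorphic via such pole-swapping maps whenever a' = λ^2 a for some λ ∈ 𝔽_5^×, i.e. whenever a'^2 = a^2 or a' = ±a. -/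
open RatFunc

/-- Pole-swapping isomorphisms for `y⁵-y = x + a/x` in characteristic 5: with
`λ ∈ 𝔽₅ˣ` (i.e. `λ⁴ = 1`) and `γ = λ/a`, substituting `x ↦ 1/(γx)` and rescaling by
`λ⁻¹` sends `x + a/x` to `x + (a/λ²)/x`; consequently the coefficients reachable this
way are exactly `a' = λ'²a` for `λ'⁴ = 1`, i.e. `a' = ±a`. -/
theorem pole_swap_g4_rank4_p5 (K : Type*) [Field K] [IsAlgClosed K] [CharP K 5]
    (a : K) (ha : a ≠ 0) (lam : K) (hlam : lam ^ 4 = 1) (γ : K) (hγ : γ = lam / a) :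
    ((RatFunc.C lam)⁻¹ *
        ((RatFunc.C γ * RatFunc.X)⁻¹ + RatFunc.C a * (RatFunc.C γ * RatFunc.X))
      = RatFunc.X + RatFunc.C (a / lam ^ 2) * (RatFunc.X : RatFunc K)⁻¹) ∧
    (∀ a' : K, (∃ lam' : K, lam' ^ 4 = 1 ∧ a' = lam' ^ 2 * a) ↔ (a' = a ∨ a' = -a)) := by
  have hl : lam ≠ 0 := by
    intro h; rw [h] at hlam; simp at hlam
  have hγ0 : γ ≠ 0 := by
    rw [hγ]; exact div_ne_zero hl ha
  constructor
  · have hCl : (RatFunc.C lam : RatFunc K) ≠ 0 := by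
      simpa using hl
    have hCγ : (RatFunc.C γ : RatFunc K) ≠ 0 := by
      simpa using hγ0
    have hX : (RatFunc.X : RatFunc K) ≠ 0 := RatFunc.X_ne_zero
    have hCa : (RatFunc.C a : RatFunc K) ≠ 0 := by simpa using ha
    have hγa : γ * lam = lam ^ 2 / a := by
      rw [hγ]; field_simp
    have hal : a / lam ^ 2 ≠ 0 := div_ne_zero ha (pow_ne_zero _ hl)
    rw [hγ]; simp only [map_div₀, map_pow]
    field_simp
    ring
  · intro a'
    constructor
    · rintro ⟨l, hl4, rfl⟩
      have : (l ^ 2 - 1) * (l ^ 2 + 1) = 0 := by ring_nf; linear_combination hl4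
      rcases mul_eq_zero.1 this with h | h
      · left; rw [sub_eq_zero.1 h]; ring
      · right; rw [eq_neg_of_add_eq_zero_left h]; ring
    · rintro (rfl | rfl)
      · exact ⟨1, by norm_num, by ring⟩
      · obtain ⟨i, hi⟩ := IsAlgClosed.exists_pow_nat_eq (-1 : K) (n := 2) (by norm_num)
        exact ⟨i, by rw [show (4:ℕ) = 2*2 by norm_num, pow_mul, hi]; ring, by rw [hi]; ring⟩
end

section
/- Let G be a finite group acting on a finitely generated algebra R over a Noetherian commutative ring K by K-algebra automorphisms. Then the invariant ring R^G is finitely generated as a K-algebra. -/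
/-- The subalgebra of `G`-invariants of a `K`-algebra `R`, for an action of `G` on `R`
by ring automorphisms fixing the image of `K` elementwise. -/
def invariantSubalgebra (G : Type*) [Group G] (K : Type*) [CommRing K]
    (R : Type*) [CommRing R] [Algebra K R] [MulSemiringAction G R]
    (hK : ∀ (g : G) (k : K), g • algebraMap K R k = algebraMap K R k) :
    Subalgebra K R where
  carrier := {r : R | ∀ g : G, g • r = r}
  mul_mem' := fun {x y} hx hy g => by rw [smul_mul', hx g, hy g]
  add_mem' := fun {x y} hx hy g => by rw [smul_add, hx g, hy g]
  algebraMap_mem' := fun k g => hK g k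

/-- Noether's finiteness theorem: if a finite group `G` acts on a finitely generated
algebra `R` over a Noetherian commutative ring `K` by automorphisms fixing `K`
elementwise, then the invariant ring `R^G` is a finitely generated `K`-algebra. -/
theorem noether_finiteness (K : Type*) [CommRing K] [IsNoetherianRing K]
    (R : Type*) [CommRing R] [Algebra K R] (hfg : Algebra.FiniteType K R)
    (G : Type*) [Group G] [Finite G] [MulSemiringAction G R]
    (hK : ∀ (g : G) (k : K), g • algebraMap K R k = algebraMap K R k) :
    (invariantSubalgebra G K R hK).FG := by
  cases nonempty_fintype G
  set B := invariantSubalgebra G K R hK with hB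
  -- R is integral over B
  have hint : Algebra.IsIntegral B R := by
    constructor
    intro x
    refine ⟨(prodXSubSMul G R x).toSubring B.toSubring
      (show ((prodXSubSMul G R x).coeffs : Set R) ⊆ B.toSubring from fun c hc g => ?_), ?_, ?_⟩
    · obtain ⟨n, _, hn⟩ := Polynomial.mem_coeffs_iff.1 hc
      exact hn.symm ▸ prodXSubSMul.coeff G R x g n
    · rw [Polynomial.monic_toSubring]
      exact prodXSubSMul.monic G R x
    · have h1 : (algebraMap B R) = B.toSubring.subtype := rfl
      rw [Polynomial.eval₂_eq_eval_map, h1, Polynomial.map_toSubring]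
      exact prodXSubSMul.eval G R x
  have hft : Algebra.FiniteType B R := Algebra.FiniteType.of_restrictScalars_finiteType K B R
  have hfin : Module.Finite B R := Algebra.IsIntegral.finite
  have h := fg_of_fg_of_fg K B R hfg.out hfin.fg_top
    (fun a b hab => Subtype.ext hab)
  exact (Subalgebra.fg_top B).mp h
end
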